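/- arXiv:2506.10455 — 2 statements merged into one kernel-verified Lean document; each statement's English description precedes it below -/
import Mathlib

section
/- Let X be a compactum (a compact perfect metric space with more than one point), let n ≥ 2 be an integer, and let f : X → X be a continuous map. Then F_n(f) is TT_{++} if and only if SF_n(f) is TT_{++}; moreover, if F_n(f) is TT_{++}, then f is TT_{++}. -/
open Metric Set TopologicalSpace

variable (X : Type*) [MetricSpace X] (n : ℕ)

/-- The `n`-fold symmetric product `F_n(X)`: nonempty subsets of `X` with at most `n`
points, as a subspace of the nonempty compact subsets of `X` with the Hausdorff metric. -/
abbrev Fn := {A : NonemptyCompacts X // (A : Set X).Finite ∧ (A : Set X).ncard ≤ n}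

/-- The induced map `F_n(f)` on the `n`-fold symmetric product, `A ↦ f(A)`. -/
noncomputable def FnMap (f : X → X) : Fn X n → Fn X n := fun A =>
  ⟨⟨⟨f '' (A.1 : Set X), (A.2.1.image f).isCompact⟩, A.1.nonempty.image f⟩,
    A.2.1.image f, le_trans (Set.ncard_image_le A.2.1) A.2.2⟩

/-- `F_1(X) ⊆ F_n(X)`: the set of singletons. -/
def F1 : Set (Fn X n) := {A | ∃ x : X, (A.1 : Set X) = {x}}

/-- The setoid collapsing `F_1(X)` to a point. -/
def SFnSetoid : Setoid (Fn X n) where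
  r A B := A = B ∨ (A ∈ F1 X n ∧ B ∈ F1 X n)
  iseqv := by
    refine ⟨fun _ => Or.inl rfl, fun h => h.imp Eq.symm And.symm, fun h₁ h₂ => ?_⟩
    rcases h₁ with rfl | h₁
    · exact h₂
    · rcases h₂ with rfl | h₂
      · exact Or.inr h₁
      · exact Or.inr ⟨h₁.1, h₂.2⟩

/-- The `n`-fold symmetric product suspension `SF_n(X) = F_n(X)/F_1(X)`,
with the quotient topology. -/
abbrev SFn := Quotient (SFnSetoid X n)

/-- The quotient map `q : F_n(X) → SF_n(X)`. -/
def SFnQ : Fn X n → SFn X n := Quotient.mk (SFnSetoid X n)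

/-- The induced map `SF_n(f)` on the suspension, with `SF_n(f) ∘ q = q ∘ F_n(f)`. -/
noncomputable def SFnMap (f : X → X) : SFn X n → SFn X n :=
  Quotient.lift (fun A => SFnQ X n (FnMap X n f A))
    (fun A B h => Quotient.sound (by
      rcases h with rfl | ⟨⟨x, hx⟩, ⟨y, hy⟩⟩
      · exact Or.inl rfl
      · exact Or.inr ⟨⟨f x, by simp [FnMap, hx]⟩, ⟨f y, by simp [FnMap, hy]⟩⟩))

/-- The metric `ρ` on `SF_n(X)`:
`ρ(χ₁,χ₂) = H(F_1(X) ∪ q⁻¹(χ₁), F_1(X) ∪ q⁻¹(χ₂))` where `H` is the Hausdorff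
distance between subsets of `F_n(X)`. -/
noncomputable def SFnDist : SFn X n → SFn X n → ℝ := fun a b =>
  Metric.hausdorffDist (F1 X n ∪ SFnQ X n ⁻¹' {a}) (F1 X n ∪ SFnQ X n ⁻¹' {b})

/-- `g` is `TT_{++}`: for all nonempty open `U, V` the set
`{k ∈ ℕ : U ∩ g^{-k}(V) ≠ ∅}` is infinite. -/
def TTpp {Z : Type*} [TopologicalSpace Z] (g : Z → Z) : Prop :=
  ∀ U V : Set Z, IsOpen U → IsOpen V → U.Nonempty → V.Nonempty →
    {k : ℕ | (U ∩ g^[k] ⁻¹' V).Nonempty}.Infinite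

/-! The quotient map `q : F_n(X) → SF_n(X)` semiconjugates `F_n(f)` to `SF_n(f)`, so `TT_{++}`
passes to the factor `SF_n(f)`. Conversely, `q` is injective off the closed set `F_1(X)`, whose
complement is dense because `X` has no isolated points and `n ≥ 2` (`{x}` is a limit of pairs
`{x, y}`); open sets missing `F_1(X)` are saturated, hence have open images, and `TT_{++}` lifts
back along `q`. Finally, the Vietoris-open sets `{A | A ⊆ U}` contain singletons, and any
`A ⊆ U` with `f^k(A) ⊆ V` yields a point of `U ∩ f^{-k}(V)`. -/

section TTpp

variable {Y Z : Type*} [TopologicalSpace Y] [TopologicalSpace Z] {g : Y → Y} {h : Z → Z}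
  {π : Y → Z}

theorem TTpp.of_semiconj (hπ : Continuous π) (hsurj : Function.Surjective π)
    (hsc : Function.Semiconj π g h) (hg : TTpp g) : TTpp h := by
  intro U V hU hV hUne hVne
  refine (hg _ _ (hU.preimage hπ) (hV.preimage hπ) (hUne.preimage hsurj)
    (hVne.preimage hsurj)).mono ?_
  rintro k ⟨y, hyU, hyV⟩
  refine ⟨π y, hyU, ?_⟩
  rwa [Set.mem_preimage, ← (hsc.iterate_right k) y]

theorem TTpp.of_semiconj_of_isQuotientMap (hπ : Topology.IsQuotientMap π)
    (hsc : Function.Semiconj π g h) {O : Set Y} (hO : IsOpen O) (hOd : Dense O)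
    (hinj : ∀ a, ∀ b ∈ O, π a = π b → a = b) (hh : TTpp h) : TTpp g := by
  have hsat : ∀ W ⊆ O, π ⁻¹' (π '' W) = W := fun W hW =>
    Set.Subset.antisymm (fun a ⟨b, hb, hab⟩ => hinj a b (hW hb) hab.symm ▸ hb)
      (Set.subset_preimage_image π W)
  have himage : ∀ W, IsOpen W → IsOpen (π '' (W ∩ O)) := fun W hW => by
    rw [← hπ.isOpen_preimage, hsat _ Set.inter_subset_right]
    exact hW.inter hO
  intro U V hU hV hUne hVne
  refine (hh _ _ (himage U hU) (himage V hV) ((hOd.inter_open_nonempty U hU hUne).image π)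
    ((hOd.inter_open_nonempty V hV hVne).image π)).mono ?_
  rintro k ⟨_, ⟨a, haU, rfl⟩, hka⟩
  rw [Set.mem_preimage, ← (hsc.iterate_right k) a, ← Set.mem_preimage,
    hsat _ Set.inter_subset_right] at hka
  exact ⟨a, haU.1, hka.1⟩

end TTpp

section SymmetricProduct

variable {X n}

def Fn.singleton (hn : 1 ≤ n) (x : X) : Fn X n :=
  ⟨{x}, Set.finite_singleton x, by simpa using hn⟩

def Fn.pair (hn : 2 ≤ n) (x y : X) : Fn X n :=
  ⟨{x} ⊔ {y}, (Set.finite_singleton x).union (Set.finite_singleton y),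
    (Set.ncard_union_le _ _).trans (by simpa using hn)⟩

theorem Fn.continuous_pair (hn : 2 ≤ n) (x : X) : Continuous (Fn.pair hn x) :=
  (continuous_const.sup NonemptyCompacts.continuous_singleton).subtype_mk _

theorem FnMap_iterate_coe (f : X → X) (k : ℕ) (A : Fn X n) :
    (((FnMap X n f)^[k] A).1 : Set X) = f^[k] '' (A.1 : Set X) := by
  have hsc : Function.Semiconj (fun A : Fn X n => (A.1 : Set X)) (FnMap X n f) (f '' ·) :=
    fun _ => rfl
  rw [Set.image_iterate_eq]
  exact hsc.iterate_right k A

theorem isOpen_setOf_coe_subset {U : Set X} (hU : IsOpen U) :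
    IsOpen {A : Fn X n | (A.1 : Set X) ⊆ U} :=
  (NonemptyCompacts.isOpen_subsets_of_isOpen hU).preimage continuous_subtype_val

theorem TTpp.of_FnMap (hn : 1 ≤ n) {f : X → X} (hf : TTpp (FnMap X n f)) : TTpp f := by
  intro U V hU hV ⟨x, hx⟩ ⟨y, hy⟩
  refine (hf _ _ (isOpen_setOf_coe_subset hU) (isOpen_setOf_coe_subset hV)
    ⟨Fn.singleton hn x, by simpa [Fn.singleton] using hx⟩
    ⟨Fn.singleton hn y, by simpa [Fn.singleton] using hy⟩).mono ?_
  rintro k ⟨A, hAU, hAV⟩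
  obtain ⟨a, ha⟩ := A.1.nonempty
  have hAV : f^[k] '' (A.1 : Set X) ⊆ V := FnMap_iterate_coe f k A ▸ hAV
  exact ⟨a, hAU ha, hAV ⟨a, ha, rfl⟩⟩

theorem F1_eq_preimage_range_singleton :
    F1 X n = Subtype.val ⁻¹' Set.range ({·} : X → NonemptyCompacts X) := by
  ext A
  simp [F1, eq_comm, NonemptyCompacts.ext_iff]

theorem isClosed_F1 : IsClosed (F1 X n) := by
  rw [F1_eq_preimage_range_singleton]
  exact NonemptyCompacts.isClosedEmbedding_singleton.isClosed_range.preimage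
    continuous_subtype_val

theorem dense_compl_F1 (hX : Perfect (Set.univ : Set X)) (hn : 2 ≤ n) :
    Dense (F1 X n)ᶜ := by
  refine dense_iff_inter_open.2 fun W hW ⟨A, hA⟩ => ?_
  by_cases hA1 : A ∈ F1 X n
  swap
  · exact ⟨A, hA, hA1⟩
  obtain ⟨x, hx⟩ := hA1
  have hpair : Fn.pair hn x x = A := by
    ext1; ext1
    simp [Fn.pair, hx]
  have hWx : Fn.pair hn x ⁻¹' W ∈ nhds x :=
    (Fn.continuous_pair hn x).continuousAt.preimage_mem_nhds (hpair ▸ hW.mem_nhds hA)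
  obtain ⟨y, ⟨hyW, -⟩, hyx⟩ := accPt_iff_nhds.1 (hX.acc x (Set.mem_univ x)) _ hWx
  refine ⟨Fn.pair hn x y, hyW, fun ⟨z, hz⟩ => hyx ?_⟩
  have hxy : ({x} ∪ {y} : Set X) = {z} := by simpa [Fn.pair] using hz
  have hxz : x ∈ ({z} : Set X) := hxy ▸ Or.inl rfl
  have hyz : y ∈ ({z} : Set X) := hxy ▸ Or.inr rfl
  exact hyz.trans hxz.symm

theorem SFnMap_semiconj (f : X → X) :
    Function.Semiconj (SFnQ X n) (FnMap X n f) (SFnMap X n f) :=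
  fun _ => rfl

theorem eq_of_SFnQ_eq (A : Fn X n) {B : Fn X n} (hB : B ∉ F1 X n)
    (h : SFnQ X n A = SFnQ X n B) : A = B :=
  (Quotient.exact h).resolve_right fun hAB => hB hAB.2

end SymmetricProduct

theorem stmt15_general (X : Type*) [MetricSpace X]
    (hX : Perfect (Set.univ : Set X))
    (n : ℕ) (hn : 2 ≤ n) (f : X → X) :
    (TTpp (FnMap X n f) ↔ TTpp (SFnMap X n f)) ∧
    (TTpp (FnMap X n f) → TTpp f) := by
  have hq : Topology.IsQuotientMap (SFnQ X n) := isQuotientMap_quotient_mk'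
  refine ⟨⟨TTpp.of_semiconj hq.continuous hq.surjective (SFnMap_semiconj f), ?_⟩,
    TTpp.of_FnMap (by omega)⟩
  exact TTpp.of_semiconj_of_isQuotientMap hq (SFnMap_semiconj f) isClosed_F1.isOpen_compl
    (dense_compl_F1 hX hn) eq_of_SFnQ_eq

theorem stmt15 (X : Type*) [MetricSpace X] [CompactSpace X] [Nontrivial X]
    (hX : Perfect (Set.univ : Set X))
    (n : ℕ) (hn : 2 ≤ n) (f : X → X) (hf : Continuous f) :
    (TTpp (FnMap X n f) ↔ TTpp (SFnMap X n f)) ∧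
    (TTpp (FnMap X n f) → TTpp f) :=
  stmt15_general X hX n hn f
end

section
/- Let X be a compactum (a compact perfect metric space with more than one point), let n ≥ 2 be an integer, and let f : X → X be a continuous map. Then F_n(f) is Touhey if and only if SF_n(f) is Touhey; moreover, if F_n(f) is Touhey, then f is Touhey. -/
open Metric Set TopologicalSpace

variable (X : Type*) [MetricSpace X] (n : ℕ)

/-- `z` is a periodic point of `g`. -/
def PeriodicPt' {Z : Type*} (g : Z → Z) (z : Z) : Prop :=
  ∃ k : ℕ, 0 < k ∧ g^[k] z = z

/-- `g` is Touhey: every pair of nonempty open sets `U, V` admits a periodic point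
`z ∈ U` and `k ∈ ℤ₊` with `g^k(z) ∈ V`. -/
def Touhey {Z : Type*} [TopologicalSpace Z] (g : Z → Z) : Prop :=
  ∀ U V : Set Z, IsOpen U → IsOpen V → U.Nonempty → V.Nonempty →
    ∃ z ∈ U, PeriodicPt' g z ∧ ∃ k : ℕ, g^[k] z ∈ V


/-!
Touhey's property passes to factors along continuous surjective semiconjugacies, which gives
`F_n(f) ⇒ SF_n(f)` via the quotient map `q`. Conversely, `q` is open and injective on the
complement of `F_1(X)`, which is open and, since `X` has no isolated points and `n ≥ 2`, dense;
as Touhey's property only needs to be tested on open sets inside a dense open set, it lifts back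
from `SF_n(f)`. Finally, if `F_n(f)^m (A) = A` then `f^m` permutes the finite set `A`, so every
point of `A` is `f`-periodic; applied to the open sets `{A | A ⊆ U}` this gives Touhey's
property for `f`.
-/

open Function

theorem Set.Finite.subset_periodicPts {α : Type*} {g : α → α} {s : Set α} (hs : s.Finite)
    (hgs : g '' s = s) : s ⊆ periodicPts g := by
  have hmaps : MapsTo g s s := fun x hx => hgs ▸ mem_image_of_mem g hx
  have : Finite s := hs.to_subtype
  have hinj : Injective (hmaps.restrict g s s) :=
    Finite.injective_iff_surjective.2 <| hmaps.restrict_surjective_iff.2 <| by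
      rw [SurjOn, hgs]
  intro x hx
  exact (show Semiconj Subtype.val (hmaps.restrict g s s) g from fun _ => rfl).mapsTo_periodicPts
    (hinj.mem_periodicPts ⟨x, hx⟩)

theorem mem_periodicPts_of_mem_periodicPts_iterate {α : Type*} {g : α → α} {x : α} {m : ℕ}
    (hm : 0 < m) (hx : x ∈ periodicPts g^[m]) : x ∈ periodicPts g := by
  obtain ⟨j, hj, hjx⟩ := hx
  exact mk_mem_periodicPts (Nat.mul_pos hm hj) (by rwa [IsPeriodicPt, IsFixedPt, iterate_mul])

section Touhey

variable {Y Z : Type*} [TopologicalSpace Y] [TopologicalSpace Z] {g : Y → Y} {h : Z → Z}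

theorem Touhey.of_dense_isOpen {W : Set Y} (hWo : IsOpen W) (hWd : Dense W)
    (hT : ∀ U V : Set Y, IsOpen U → IsOpen V → U ⊆ W → V ⊆ W → U.Nonempty → V.Nonempty →
      ∃ z ∈ U, PeriodicPt' g z ∧ ∃ k : ℕ, g^[k] z ∈ V) :
    Touhey g := by
  intro U V hU hV hUne hVne
  obtain ⟨z, hz, hper, k, hk⟩ := hT (U ∩ W) (V ∩ W) (hU.inter hWo) (hV.inter hWo)
    inter_subset_right inter_subset_right (hWd.inter_open_nonempty U hU hUne)
    (hWd.inter_open_nonempty V hV hVne)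
  exact ⟨z, hz.1, hper, k, hk.1⟩

theorem Touhey.semiconj {q : Y → Z} (hq : Semiconj q g h) (hqc : Continuous q)
    (hqs : Surjective q) (hT : Touhey g) : Touhey h := by
  intro U V hU hV hUne hVne
  obtain ⟨y, hy, hper, k, hk⟩ := hT (q ⁻¹' U) (q ⁻¹' V) (hU.preimage hqc) (hV.preimage hqc)
    (hUne.preimage hqs) (hVne.preimage hqs)
  exact ⟨q y, hy, hq.mapsTo_periodicPts hper, k, by rwa [← (hq.iterate_right k) y]⟩

theorem Touhey.of_semiconj {q : Y → Z} (hq : Semiconj q g h) {W : Set Y} (hWo : IsOpen W)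
    (hWd : Dense W) (hqW : ∀ U ⊆ W, IsOpen U → IsOpen (q '' U))
    (hfiber : ∀ w ∈ W, ∀ y, q y = q w → y = w) (hT : Touhey h) : Touhey g := by
  refine Touhey.of_dense_isOpen hWo hWd fun U V hU hV hUW hVW hUne hVne => ?_
  obtain ⟨_, ⟨z, hz, rfl⟩, ⟨m, hm, hper⟩, k, ⟨v, hv, hqv⟩⟩ :=
    hT (q '' U) (q '' V) (hqW U hUW hU) (hqW V hVW hV) (hUne.image q) (hVne.image q)
  refine ⟨z, hz, ⟨m, hm, hfiber z (hUW hz) _ ?_⟩, k, ?_⟩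
  · rw [(hq.iterate_right m) z]; exact hper
  · rwa [hfiber v (hVW hv) (g^[k] z) (by rw [(hq.iterate_right k) z, hqv])]

end Touhey

namespace Fn

variable {X : Type*} [MetricSpace X] {n : ℕ}

def ofFinite (s : Set X) (hne : s.Nonempty) (hs : s.Finite) (hcard : s.ncard ≤ n) : Fn X n :=
  ⟨⟨⟨s, hs.isCompact⟩, hne⟩, hs, hcard⟩

@[simp]
theorem coe_ofFinite (s : Set X) (hne : s.Nonempty) (hs : s.Finite) (hcard : s.ncard ≤ n) :
    ((ofFinite s hne hs hcard).1 : Set X) = s :=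
  rfl

theorem coe_FnMap_iterate (f : X → X) (k : ℕ) (A : Fn X n) :
    (((FnMap X n f)^[k] A).1 : Set X) = f^[k] '' A.1 := by
  induction k with
  | zero => simp
  | succ k ih => rw [iterate_succ_apply', iterate_succ', image_comp, ← ih]; rfl

theorem mem_F1_iff {A : Fn X n} : A ∈ F1 X n ↔ (A.1 : Set X).ncard = 1 :=
  ncard_eq_one.symm

theorem isOpen_setOf_subset {U : Set X} (hU : IsOpen U) :
    IsOpen {A : Fn X n | (A.1 : Set X) ⊆ U} :=
  (NonemptyCompacts.isOpen_subsets_of_isOpen hU).preimage continuous_subtype_val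

theorem isClosed_F1 : IsClosed (F1 X n) := by
  have : F1 X n = Subtype.val ⁻¹' range ({·} : X → NonemptyCompacts X) := by
    ext A
    simp only [F1, mem_preimage, mem_range, SetLike.ext'_iff, NonemptyCompacts.coe_singleton]
    exact exists_congr fun x => eq_comm
  rw [this]
  exact NonemptyCompacts.isClosedEmbedding_singleton.isClosed_range.preimage continuous_subtype_val

theorem dense_compl_F1 [PerfectSpace X] (hn : 2 ≤ n) : Dense (F1 X n)ᶜ := by
  rw [Metric.dense_iff]
  intro A ε hε
  by_cases hA : A ∈ F1 X n
  swap
  · exact ⟨A, mem_ball_self hε, hA⟩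
  obtain ⟨x, hx⟩ := hA
  obtain ⟨y, ⟨hy, -⟩, hyx⟩ := preperfect_iff_nhds.1 PerfectSpace.univ_preperfect x trivial _
    (ball_mem_nhds x hε)
  have hxy : x ≠ y := hyx.symm
  refine ⟨ofFinite {x, y} (insert_nonempty x {y}) ((finite_singleton y).insert x)
    ((ncard_pair hxy).trans_le hn), ?_, ?_⟩
  · rw [mem_ball, Subtype.dist_eq, NonemptyCompacts.dist_eq, coe_ofFinite, hx]
    refine (hausdorffDist_le_of_mem_dist dist_nonneg ?_ ?_).trans_lt (mem_ball.1 hy)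
    · rintro z (rfl | rfl) <;> exact ⟨_, rfl, by simp⟩
    · rintro z rfl
      exact ⟨z, mem_insert z {y}, by simp⟩
  · rw [mem_compl_iff, mem_F1_iff, coe_ofFinite, ncard_pair hxy]
    decide

end Fn

section

variable {X : Type*} [MetricSpace X] {n : ℕ}

theorem touhey_of_touhey_FnMap (hn : 1 ≤ n) {f : X → X} (hT : Touhey (FnMap X n f)) :
    Touhey f := by
  intro U V hU hV ⟨u, hu⟩ ⟨v, hv⟩
  let single (x : X) : Fn X n :=
    Fn.ofFinite {x} (singleton_nonempty x) (finite_singleton x) ((ncard_singleton x).trans_le hn)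
  obtain ⟨A, hAU, ⟨m, hm, hper⟩, k, hk⟩ := hT _ _ (Fn.isOpen_setOf_subset hU)
    (Fn.isOpen_setOf_subset hV) ⟨single u, singleton_subset_iff.2 hu⟩
    ⟨single v, singleton_subset_iff.2 hv⟩
  have hAper : f^[m] '' A.1 = A.1 := by rw [← Fn.coe_FnMap_iterate, hper]
  obtain ⟨x, hx⟩ := A.1.nonempty
  refine ⟨x, hAU hx, mem_periodicPts_of_mem_periodicPts_iterate hm
    (A.2.1.subset_periodicPts hAper hx), k, hk ?_⟩
  rw [Fn.coe_FnMap_iterate]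
  exact mem_image_of_mem _ hx

theorem semiconj_SFnQ (f : X → X) : Semiconj (SFnQ X n) (FnMap X n f) (SFnMap X n f) :=
  fun _ => rfl

theorem SFnQ_eq_SFnQ_iff_of_notMem_F1 {A : Fn X n} (hA : A ∉ F1 X n) (B : Fn X n) :
    SFnQ X n B = SFnQ X n A ↔ B = A := by
  refine ⟨fun h => ?_, congrArg _⟩
  rcases Quotient.exact h with h | ⟨-, hA'⟩
  · exact h
  · exact absurd hA' hA

theorem isOpen_image_SFnQ {W : Set (Fn X n)} (hW : IsOpen W) (hWF : W ⊆ (F1 X n)ᶜ) :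
    IsOpen (SFnQ X n '' W) := by
  have hsat : SFnQ X n ⁻¹' (SFnQ X n '' W) = W := by
    refine Subset.antisymm ?_ (subset_preimage_image _ _)
    rintro B ⟨A, hA, hAB⟩
    rwa [(SFnQ_eq_SFnQ_iff_of_notMem_F1 (hWF hA) B).1 hAB.symm]
  exact isQuotientMap_quotient_mk'.isOpen_preimage.1 (hsat.symm ▸ hW)

theorem touhey_SFnMap_of_touhey_FnMap {f : X → X} (hT : Touhey (FnMap X n f)) :
    Touhey (SFnMap X n f) :=
  hT.semiconj (semiconj_SFnQ f) continuous_quot_mk Quotient.mk_surjective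

theorem touhey_FnMap_of_touhey_SFnMap [PerfectSpace X] (hn : 2 ≤ n) {f : X → X}
    (hT : Touhey (SFnMap X n f)) : Touhey (FnMap X n f) :=
  hT.of_semiconj (semiconj_SFnQ f) Fn.isClosed_F1.isOpen_compl (Fn.dense_compl_F1 hn)
    (fun _ hU hUo => isOpen_image_SFnQ hUo hU)
    fun _ hA B => (SFnQ_eq_SFnQ_iff_of_notMem_F1 hA B).1

end

theorem stmt16_general (X : Type*) [MetricSpace X]
    (hX : Perfect (Set.univ : Set X))
    (n : ℕ) (hn : 2 ≤ n) (f : X → X) :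
    (Touhey (FnMap X n f) ↔ Touhey (SFnMap X n f)) ∧
    (Touhey (FnMap X n f) → Touhey f) := by
  have : PerfectSpace X := ⟨hX.acc⟩
  exact ⟨⟨touhey_SFnMap_of_touhey_FnMap, touhey_FnMap_of_touhey_SFnMap hn⟩,
    touhey_of_touhey_FnMap (one_le_two.trans hn)⟩

theorem stmt16 (X : Type*) [MetricSpace X] [CompactSpace X] [Nontrivial X]
    (hX : Perfect (Set.univ : Set X))
    (n : ℕ) (hn : 2 ≤ n) (f : X → X) (hf : Continuous f) :
    (Touhey (FnMap X n f) ↔ Touhey (SFnMap X n f)) ∧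
    (Touhey (FnMap X n f) → Touhey f) :=
  stmt16_general X hX n hn f
end
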